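/- arXiv:1403.2926 — 3 statements merged into one kernel-verified Lean document; each statement's English description precedes it below -/
import Mathlib

section
/- Let G = (V,E,C) be an edge-coloured graph with |C| = k colours. If G admits a tree decomposition of width w, then the associated simple graph Ḡ admits a tree decomposition of width at most w + C(k+3,2) − 1, where C(n,r) denotes the binomial coefficient. -/
/-- An edge-coloured graph with `k` colours `c_1, …, c_k`: the colour `c_{i+1}`
is represented by the index `i : Fin k`.  Each arc is an unordered pair of
distinct endpoints together with a colour; loops are forbidden, and parallel
arcs must have distinct colours (automatic, since arcs form a set). -/
structure EdgeColouredGraph (k : ℕ) where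
  V : Type
  [fintypeV : Fintype V]
  [decEqV : DecidableEq V]
  arcs : Finset (Sym2 V × Fin k)
  loopless : ∀ a ∈ arcs, ¬ (a.1 : Sym2 V).IsDiag

attribute [instance] EdgeColouredGraph.fintypeV EdgeColouredGraph.decEqV

namespace EdgeColouredGraph

variable {k : ℕ}

/-- The type of arcs of an edge-coloured graph. -/
def Arc (G : EdgeColouredGraph k) : Type := {a : Sym2 G.V × Fin k // a ∈ G.arcs}

/-- Adjacency in an edge-coloured graph: `v` and `w` are the two (distinct)
endpoints of a common arc. -/
def Adj (G : EdgeColouredGraph k) (v w : G.V) : Prop :=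
  v ≠ w ∧ ∃ c : Fin k, (s(v, w), c) ∈ G.arcs

/-- Nodes of the associated simple graph `Ḡ`: a copy `v̄` of each node of `G`,
a node `ē` for each arc of `G`, and the clique nodes `κ_{i,j}`; for the colour
with index `i : Fin k` (i.e. the colour `c_{i+1}`) there are `(i+1)+2 = i+3`
clique nodes. -/
def AssocNode (G : EdgeColouredGraph k) : Type :=
  G.V ⊕ G.Arc ⊕ (Σ i : Fin k, Fin ((i : ℕ) + 3))

/-- The arcs of `Ḡ` (as an unoriented base relation): all arcs inside each
clique `κ_{i,1}, …, κ_{i,i+3}`, the arcs `{ē, v̄}` and `{ē, w̄}` for each arc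
`e` of `G` with endpoints `v, w`, and the arc `{ē, κ_{c,1}}` where `c` is the
colour of `e`. -/
def assocBaseRel (G : EdgeColouredGraph k) : G.AssocNode → G.AssocNode → Prop
  | Sum.inr (Sum.inr ⟨i, _⟩), Sum.inr (Sum.inr ⟨i', _⟩) => i = i'
  | Sum.inr (Sum.inl e), Sum.inl v => v ∈ e.val.1
  | Sum.inr (Sum.inl e), Sum.inr (Sum.inr ⟨i, j⟩) => e.val.2 = i ∧ j = 0
  | _, _ => False

/-- The simple graph `Ḡ` associated to the edge-coloured graph `G`. -/
def Assoc (G : EdgeColouredGraph k) : SimpleGraph G.AssocNode :=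
  SimpleGraph.fromRel G.assocBaseRel

end EdgeColouredGraph

/-- A tree decomposition of a graph, presented by its node type `V` and an
adjacency relation `Adj` (this covers simple graphs, multigraphs and
edge-coloured graphs alike): a finite tree together with finite bags
satisfying the usual covering and connectivity conditions. -/
structure TreeDecomp {V : Type} (Adj : V → V → Prop) where
  /-- index type of the tree nodes -/
  ι : Type
  [fin : Fintype ι]
  tree : SimpleGraph ι
  isTree : tree.IsTree
  bag : ι → Set V
  bag_finite : ∀ t, (bag t).Finite
  covers : ∀ v : V, ∃ t, v ∈ bag t
  covers_adj : ∀ v w : V, Adj v w → ∃ t, v ∈ bag t ∧ w ∈ bag t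
  subtree : ∀ v : V, (tree.induce {t | v ∈ bag t}).Connected

/-- The width of a tree decomposition: `max_τ |B_τ| − 1`. -/
noncomputable def TreeDecomp.width {V : Type} {Adj : V → V → Prop}
    (D : TreeDecomp Adj) : ℕ :=
  letI := D.fin
  (Finset.univ.sup fun t => (D.bag t).ncard) - 1

/-- The treewidth of a graph: the minimum width of a tree decomposition. -/
noncomputable def treewidth {V : Type} (Adj : V → V → Prop) : ℕ :=
  sInf {w | ∃ D : TreeDecomp Adj, D.width = w}

/-!
Hang, for every arc `e` of `G`, a pendant leaf off a tree node whose bag contains both endpoints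
of `e`. Every bag receives all the clique nodes `κ` (there are `C(k+3,2) - 3` of them); an old
bag `B_t` also receives the copies `v̄` of its nodes, and the leaf of `e` receives `ē` and the two
endpoints of `e`. Then `ē` lies in a single bag, `v̄` in the old subtree of `v` together with
some leaves hanging off it, and each `κ` in every bag, so the new bags are still connected; they
have at most `(w + 1) + C(k+3,2) - 3` resp. `3 + C(k+3,2) - 3` elements.
-/

namespace SimpleGraph

variable {α β : Type*} (T : SimpleGraph α) (f : β → α)

def attachLeaves : SimpleGraph (α ⊕ β) where
  Adj
    | .inl a, .inl a' => T.Adj a a'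
    | .inl a, .inr b | .inr b, .inl a => f b = a
    | .inr _, .inr _ => False
  symm := ⟨by rintro (a | b) (a' | b') h <;> first | exact T.adj_symm h | exact h⟩
  loopless := ⟨by rintro (a | b) h; exacts [T.loopless.irrefl a h, h]⟩

variable {T f}

@[simp] lemma attachLeaves_adj_inl_inl {a a' : α} :
    (attachLeaves T f).Adj (.inl a) (.inl a') ↔ T.Adj a a' := .rfl

@[simp] lemma attachLeaves_adj_inl_inr {a : α} {b : β} :
    (attachLeaves T f).Adj (.inl a) (.inr b) ↔ f b = a := .rfl

@[simp] lemma attachLeaves_adj_inr_inl {a : α} {b : β} :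
    (attachLeaves T f).Adj (.inr b) (.inl a) ↔ f b = a := .rfl

@[simp] lemma not_attachLeaves_adj_inr_inr {b b' : β} :
    ¬ (attachLeaves T f).Adj (.inr b) (.inr b') := id

lemma edgeSet_attachLeaves :
    (attachLeaves T f).edgeSet =
      (T.map Function.Embedding.inl).edgeSet ∪ Set.range fun b => s(.inl (f b), .inr b) := by
  ext z
  induction z using Sym2.ind with
  | _ x y => rcases x with a | b <;> rcases y with a' | b' <;> simp [eq_comm]

lemma card_edgeSet_attachLeaves [Finite α] [Finite β] :
    Nat.card (attachLeaves T f).edgeSet = Nat.card T.edgeSet + Nat.card β := by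
  have hdisj : Disjoint (T.map Function.Embedding.inl).edgeSet
      (Set.range fun b => s((.inl (f b) : α ⊕ β), .inr b)) := by
    simp [Set.disjoint_left, Sym2.forall]
  rw [Nat.card_coe_set_eq, Nat.card_coe_set_eq, edgeSet_attachLeaves, Set.ncard_union_eq hdisj,
    edgeSet_map, Set.ncard_image_of_injective _ Function.Embedding.inl.sym2Map.injective,
    Set.ncard_range_of_injective]
  intro b b' h
  simp_all

lemma connected_induce_attachLeaves {s : Set (α ⊕ β)}
    (hs : (T.induce (Sum.inl ⁻¹' s)).Connected) (hleaf : ∀ b, .inr b ∈ s → .inl (f b) ∈ s) :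
    ((attachLeaves T f).induce s).Connected := by
  let φ : T.induce (Sum.inl ⁻¹' s) →g (attachLeaves T f).induce s :=
    induceHom ⟨Sum.inl, id⟩ fun _ h => h
  obtain ⟨a₀⟩ := hs.nonempty
  rw [connected_iff_exists_forall_reachable]
  refine ⟨φ a₀, ?_⟩
  rintro ⟨a | b, hx⟩
  · exact (hs.preconnected a₀ ⟨a, hx⟩).map φ
  · exact ((hs.preconnected a₀ ⟨f b, hleaf b hx⟩).map φ).trans (Adj.reachable rfl)

lemma attachLeaves_isTree [Finite α] [Finite β] (hT : T.IsTree) :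
    (attachLeaves T f).IsTree := by
  rw [isTree_iff_connected_and_card] at hT ⊢
  constructor
  · rw [← (induceUnivIso _).connected_iff]
    refine connected_induce_attachLeaves ?_ fun _ _ => trivial
    exact (induceUnivIso _).connected_iff.mpr hT.1
  · rw [card_edgeSet_attachLeaves, Nat.card_sum, ← hT.2]
    ring

end SimpleGraph

namespace TreeDecomp

variable {V : Type} {Adj : V → V → Prop} (D : TreeDecomp Adj)

lemma ncard_bag_le_width_add_one (t : D.ι) : (D.bag t).ncard ≤ D.width + 1 := by
  let := D.fin
  have := Finset.le_sup (f := fun t => (D.bag t).ncard) (Finset.mem_univ t)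
  rw [width]
  omega

variable {D}

lemma width_le_of_forall_ncard_bag_le {n : ℕ} (h : ∀ t, (D.bag t).ncard ≤ n + 1) :
    D.width ≤ n := by
  let := D.fin
  have : (Finset.univ.sup fun t => (D.bag t).ncard) ≤ n + 1 := Finset.sup_le fun t _ => h t
  rw [width]
  omega

end TreeDecomp

lemma Sym2.ncard_setOf_mem_le_two {α : Type*} (z : Sym2 α) : {a | a ∈ z}.ncard ≤ 2 := by
  induction z using Sym2.ind with
  | _ x y =>
    have : {a | a ∈ s(x, y)} = {x, y} := by ext; simp
    rw [this]
    exact (Set.ncard_insert_le _ _).trans (by simp)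

namespace EdgeColouredGraph

open SimpleGraph

variable {k : ℕ} {G : EdgeColouredGraph k}

instance : Fintype G.Arc := inferInstanceAs (Fintype {a // a ∈ G.arcs})

abbrev CliqueNode (k : ℕ) : Type := Σ i : Fin k, Fin ((i : ℕ) + 3)

lemma card_cliqueNode_add_three (k : ℕ) :
    Fintype.card (CliqueNode k) + 3 = (k + 3).choose 2 := by
  induction k with
  | zero => rfl
  | succ n ih =>
    have pascal : (n + 1 + 3).choose 2 = (n + 3).choose 1 + (n + 3).choose 2 :=
      Nat.choose_succ_succ' (n + 3) 1
    rw [Fintype.card_sigma, Fin.sum_univ_castSucc] at *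
    simp only [Fin.val_castSucc, Fin.val_last, Fintype.card_fin] at *
    rw [pascal, Nat.choose_one_right]
    omega

variable (G) in
def cliqueSet : Set (G.V ⊕ G.Arc ⊕ CliqueNode k) := Set.range fun p => .inr (.inr p)

lemma ncard_cliqueSet_add_three : G.cliqueSet.ncard + 3 = (k + 3).choose 2 := by
  rw [cliqueSet, Set.ncard_range_of_injective, Nat.card_eq_fintype_card,
    card_cliqueNode_add_three]
  exact Sum.inr_injective.comp Sum.inr_injective

lemma exists_endpoints_mem_bag (D : TreeDecomp G.Adj) (e : G.Arc) :
    ∃ t, ∀ v ∈ e.val.1, v ∈ D.bag t := by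
  obtain ⟨⟨z, c⟩, he⟩ := e
  induction z using Sym2.ind with
  | _ x y =>
    have hxy : x ≠ y := fun h => G.loopless _ he (by simp [h])
    obtain ⟨t, hx, hy⟩ := D.covers_adj x y ⟨hxy, c, he⟩
    exact ⟨t, by simp [hx, hy]⟩

noncomputable def arcHome (D : TreeDecomp G.Adj) (e : G.Arc) : D.ι :=
  (exists_endpoints_mem_bag D e).choose

lemma mem_bag_arcHome {D : TreeDecomp G.Adj} {e : G.Arc} {v : G.V} (hv : v ∈ e.val.1) :
    v ∈ D.bag (arcHome D e) :=
  (exists_endpoints_mem_bag D e).choose_spec v hv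

/-- Bags are sets in the unfolded sum type `G.V ⊕ G.Arc ⊕ CliqueNode k` rather than in
`G.AssocNode`, so that `simp` can see through the summands. -/
def assocBag (D : TreeDecomp G.Adj) : D.ι ⊕ G.Arc → Set (G.V ⊕ G.Arc ⊕ CliqueNode k) :=
  Sum.elim (fun t => Sum.inl '' D.bag t ∪ G.cliqueSet)
    (fun e => insert (.inr (.inl e)) (Sum.inl '' {v | v ∈ e.val.1} ∪ G.cliqueSet))

variable {D : TreeDecomp G.Adj}

@[simp] lemma inl_mem_assocBag_inl {v : G.V} {t : D.ι} :
    .inl v ∈ assocBag D (.inl t) ↔ v ∈ D.bag t := by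
  simp [assocBag, cliqueSet]

@[simp] lemma inl_mem_assocBag_inr {v : G.V} {e : G.Arc} :
    .inl v ∈ assocBag D (.inr e) ↔ v ∈ e.val.1 := by
  simp [assocBag, cliqueSet]

@[simp] lemma arc_not_mem_assocBag_inl {e : G.Arc} {t : D.ι} :
    .inr (.inl e) ∉ assocBag D (.inl t) := by
  simp [assocBag, cliqueSet]

@[simp] lemma arc_mem_assocBag_inr {e e' : G.Arc} :
    .inr (.inl e) ∈ assocBag D (.inr e') ↔ e = e' := by
  simp [assocBag, cliqueSet]

@[simp] lemma clique_mem_assocBag (p : CliqueNode k) (x : D.ι ⊕ G.Arc) :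
    .inr (.inr p) ∈ assocBag D x := by
  rcases x with t | e <;> simp [assocBag, cliqueSet]

lemma ncard_assocBag_le (x : D.ι ⊕ G.Arc) :
    (assocBag D x).ncard ≤ D.width + (k + 3).choose 2 := by
  have hK := ncard_cliqueSet_add_three (G := G)
  rcases x with t | e
  · have hB := D.ncard_bag_le_width_add_one t
    calc (assocBag D (.inl t)).ncard
        ≤ (Sum.inl '' D.bag t : Set (G.V ⊕ G.Arc ⊕ CliqueNode k)).ncard + G.cliqueSet.ncard :=
          Set.ncard_union_le _ _
      _ = (D.bag t).ncard + G.cliqueSet.ncard := by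
          rw [Set.ncard_image_of_injective _ Sum.inl_injective]
      _ ≤ D.width + (k + 3).choose 2 := by omega
  · have hE := Sym2.ncard_setOf_mem_le_two e.val.1
    calc (assocBag D (.inr e)).ncard
        ≤ (Sum.inl '' {v | v ∈ e.val.1} : Set (G.V ⊕ G.Arc ⊕ CliqueNode k)).ncard
            + G.cliqueSet.ncard + 1 :=
          (Set.ncard_insert_le _ _).trans (Nat.add_le_add_right (Set.ncard_union_le _ _) 1)
      _ = {v | v ∈ e.val.1}.ncard + G.cliqueSet.ncard + 1 := by
          rw [Set.ncard_image_of_injective _ Sum.inl_injective]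
      _ ≤ D.width + (k + 3).choose 2 := by omega

lemma exists_assocBag_of_assocBaseRel {x y : G.V ⊕ G.Arc ⊕ CliqueNode k}
    (h : G.assocBaseRel x y) : ∃ t, x ∈ assocBag D t ∧ y ∈ assocBag D t := by
  rcases x with v | e | p <;> rcases y with v' | e' | p' <;> simp only [assocBaseRel] at h
  · exact ⟨.inr e, by simp, by simpa using h⟩
  · exact ⟨.inr e, by simp, by simp⟩
  · exact ⟨.inl D.isTree.connected.nonempty.some, by simp, by simp⟩

lemma connected_induce_assocBag_vertex (v : G.V) :
    ((attachLeaves D.tree (arcHome D)).induce {x | .inl v ∈ assocBag D x}).Connected := by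
  refine connected_induce_attachLeaves ?_ fun e he => ?_
  · have : Sum.inl ⁻¹' {x | .inl v ∈ assocBag D x} = {t | v ∈ D.bag t} := by
      ext t
      simp
    rw [this]
    exact D.subtree v
  · simpa using mem_bag_arcHome (by simpa using he)

lemma connected_induce_assocBag_arc (e : G.Arc) :
    ((attachLeaves D.tree (arcHome D)).induce {x | .inr (.inl e) ∈ assocBag D x}).Connected := by
  have : {x | .inr (.inl e) ∈ assocBag D x} = {.inr e} := by
    ext (t | e') <;> simp [eq_comm]
  rw [this, induce_singleton_eq_top]
  exact connected_top

lemma connected_induce_assocBag_clique (p : CliqueNode k) :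
    ((attachLeaves D.tree (arcHome D)).induce {x | .inr (.inr p) ∈ assocBag D x}).Connected := by
  refine connected_induce_attachLeaves ?_ fun _ _ => by simp
  have : Sum.inl ⁻¹' {x | .inr (.inr p) ∈ assocBag D x} = Set.univ := by
    ext t
    simp
  rw [this, (induceUnivIso _).connected_iff]
  exact D.isTree.connected

variable (D) in
noncomputable def assocTreeDecomp : TreeDecomp G.Assoc.Adj :=
  letI := D.fin
  { ι := D.ι ⊕ G.Arc
    tree := attachLeaves D.tree (arcHome D)
    isTree := attachLeaves_isTree D.isTree
    bag := assocBag D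
    bag_finite := fun x => (assocBag D x).toFinite
    covers := by
      rintro (v | e | p)
      · obtain ⟨t, ht⟩ := D.covers v
        exact ⟨.inl t, inl_mem_assocBag_inl.mpr ht⟩
      · exact ⟨.inr e, arc_mem_assocBag_inr.mpr rfl⟩
      · exact ⟨.inl D.isTree.connected.nonempty.some, clique_mem_assocBag p _⟩
    covers_adj := by
      rintro x y ⟨-, h | h⟩
      · exact exists_assocBag_of_assocBaseRel h
      · obtain ⟨t, hy, hx⟩ := exists_assocBag_of_assocBaseRel h
        exact ⟨t, hx, hy⟩
    subtree := by
      rintro (v | e | p)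
      exacts [connected_induce_assocBag_vertex v, connected_induce_assocBag_arc e,
        connected_induce_assocBag_clique p] }

lemma width_assocTreeDecomp_le :
    (assocTreeDecomp D).width ≤ D.width + (k + 3).choose 2 - 1 := by
  refine TreeDecomp.width_le_of_forall_ncard_bag_le fun x => (ncard_assocBag_le x).trans ?_
  have := ncard_cliqueSet_add_three (G := G)
  omega

end EdgeColouredGraph

/-- If an edge-coloured graph `G` with `k` colours admits a
tree decomposition of width `w`, then the associated simple graph `Ḡ` admits
a tree decomposition of width at most `w + C(k+3, 2) − 1`. -/
theorem assoc_treeDecomp {k : ℕ} (G : EdgeColouredGraph k) (w : ℕ)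
    (D : TreeDecomp G.Adj) (hD : D.width = w) :
    ∃ D' : TreeDecomp G.Assoc.Adj, D'.width ≤ w + Nat.choose (k + 3) 2 - 1 :=
  ⟨G.assocTreeDecomp D, hD ▸ EdgeColouredGraph.width_assocTreeDecomp_le⟩
end

section
/- In the simple graph Ḡ associated to an edge-coloured graph G = (V,E,C) with colours C = {c_1,…,c_k}, the following characterizations hold for every node x of Ḡ: (1) x = κ_{i,j} for some j if and only if the largest clique of Ḡ containing x has exactly i+2 nodes; (2) x = ē for some arc e ∈ E if and only if x lies in no triangle of Ḡ but some neighbour of x lies in a triangle; (3) x = v̄ for some node v ∈ V if and only if x lies in no triangle of Ḡ and no neighbour of x lies in a triangle. -/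
/-- `x` lies in a triangle (a clique of size 3) of the simple graph `H`. -/
def InTriangle {N : Type} (H : SimpleGraph N) (x : N) : Prop :=
  ∃ s : Finset N, H.IsNClique 3 s ∧ x ∈ s

/-!
The nodes of `Ḡ` lying in a triangle are exactly the clique nodes `κ_{i,j}`: the neighbours
of `v̄` are arc nodes, which are pairwise non-adjacent, and the neighbours of `ē` are the
`v̄`'s and `κ_{c,1}`, no two of which are adjacent. Hence a clique with at least three nodes
through `κ_{i,j}` consists of clique nodes adjacent to `κ_{i,j}`, so it lies inside the
`i`-th colour clique, which has `i + 3` nodes. An arc node `ē` is told apart from a node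
`v̄` by its neighbour `κ_{c,1}`.
-/

theorem SimpleGraph.IsClique.inTriangle {N : Type} {H : SimpleGraph N} {s : Finset N}
    (hs : H.IsClique (s : Set N)) (hcard : 3 ≤ s.card) {x : N} (hx : x ∈ s) :
    InTriangle H x := by
  classical
  obtain ⟨y, hy, z, hz, hyz⟩ := Finset.one_lt_card.mp (by
    rw [Finset.card_erase_of_mem hx]; omega : 1 < (s.erase x).card)
  rw [Finset.mem_erase] at hy hz
  refine ⟨{x, y, z}, SimpleGraph.is3Clique_triple_iff.mpr ⟨?_, ?_, ?_⟩,
    Finset.mem_insert_self _ _⟩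
  exacts [hs hx hy.2 (Ne.symm hy.1), hs hx hz.2 (Ne.symm hz.1), hs hy.2 hz.2 hyz]

theorem inTriangle_iff_exists_adj {N : Type} {H : SimpleGraph N} {x : N} :
    InTriangle H x ↔ ∃ y z, H.Adj x y ∧ H.Adj x z ∧ H.Adj y z := by
  classical
  constructor
  · rintro ⟨s, hs, hx⟩
    obtain ⟨a, b, c, hab, hac, hbc, rfl⟩ := SimpleGraph.is3Clique_iff.mp hs
    simp only [Finset.mem_insert, Finset.mem_singleton] at hx
    rcases hx with rfl | rfl | rfl
    · exact ⟨b, c, hab, hac, hbc⟩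
    · exact ⟨a, c, hab.symm, hbc, hac⟩
    · exact ⟨a, b, hac.symm, hbc.symm, hab⟩
  · rintro ⟨y, z, hxy, hxz, hyz⟩
    exact ⟨{x, y, z}, SimpleGraph.is3Clique_triple_iff.mpr ⟨hxy, hxz, hyz⟩,
      Finset.mem_insert_self _ _⟩

namespace EdgeColouredGraph

variable {k : ℕ} {G : EdgeColouredGraph k}

/- `AssocNode` is not reducible, so `simp` and `rw` cannot see its `Sum` structure; adjacency is
therefore computed one pair of constructors at a time, by unfolding `fromRel` definitionally. -/
theorem not_assoc_adj_inl_inl (v w : G.V) : ¬ G.Assoc.Adj (Sum.inl v) (Sum.inl w) :=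
  fun h => h.2.elim id id

theorem not_assoc_adj_inl_kappa (v : G.V) (i : Fin k) (j : Fin ((i : ℕ) + 3)) :
    ¬ G.Assoc.Adj (Sum.inl v) (Sum.inr (Sum.inr ⟨i, j⟩)) :=
  fun h => h.2.elim id id

theorem not_assoc_adj_arc_arc (e e' : G.Arc) :
    ¬ G.Assoc.Adj (Sum.inr (Sum.inl e)) (Sum.inr (Sum.inl e')) :=
  fun h => h.2.elim id id

theorem assoc_adj_arc_kappa_iff {e : G.Arc} {i : Fin k} {j : Fin ((i : ℕ) + 3)} :
    G.Assoc.Adj (Sum.inr (Sum.inl e)) (Sum.inr (Sum.inr ⟨i, j⟩)) ↔ e.val.2 = i ∧ j = 0 :=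
  ⟨fun h => h.2.elim id False.elim, fun h => ⟨nofun, Or.inl h⟩⟩

theorem assoc_adj_kappa_kappa_iff {i i' : Fin k} {j : Fin ((i : ℕ) + 3)}
    {j' : Fin ((i' : ℕ) + 3)} :
    G.Assoc.Adj (Sum.inr (Sum.inr ⟨i, j⟩)) (Sum.inr (Sum.inr ⟨i', j'⟩)) ↔
      i = i' ∧ (⟨i, j⟩ : Σ i : Fin k, Fin ((i : ℕ) + 3)) ≠ ⟨i', j'⟩ :=
  ⟨fun h => ⟨h.2.elim id Eq.symm, fun hij => h.1 (by rw [hij])⟩,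
    fun h => ⟨fun hij => h.2 (Sum.inr_injective (Sum.inr_injective hij)), Or.inl h.1⟩⟩


theorem assoc_adj_arc_kappa (e : G.Arc) :
    G.Assoc.Adj (Sum.inr (Sum.inl e)) (Sum.inr (Sum.inr ⟨e.val.2, 0⟩)) :=
  assoc_adj_arc_kappa_iff.mpr ⟨rfl, rfl⟩

theorem exists_arc_of_assoc_adj_inl {v : G.V} {y : G.AssocNode}
    (h : G.Assoc.Adj (Sum.inl v) y) : ∃ e : G.Arc, y = Sum.inr (Sum.inl e) := by
  rcases y with w | e | ⟨i, j⟩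
  · exact absurd h (not_assoc_adj_inl_inl v w)
  · exact ⟨e, rfl⟩
  · exact absurd h (not_assoc_adj_inl_kappa v i j)

theorem eq_inl_or_eq_kappa_of_assoc_adj_arc {e : G.Arc} {y : G.AssocNode}
    (h : G.Assoc.Adj (Sum.inr (Sum.inl e)) y) :
    (∃ v : G.V, y = Sum.inl v) ∨ y = Sum.inr (Sum.inr ⟨e.val.2, 0⟩) := by
  rcases y with w | e' | ⟨i, j⟩
  · exact Or.inl ⟨w, rfl⟩
  · exact absurd h (not_assoc_adj_arc_arc e e')
  · obtain ⟨rfl, rfl⟩ := assoc_adj_arc_kappa_iff.mp h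
    exact Or.inr rfl

theorem not_inTriangle_inl (v : G.V) : ¬ InTriangle G.Assoc (Sum.inl v) := by
  intro h
  obtain ⟨y, z, hy, hz, hyz⟩ := inTriangle_iff_exists_adj.mp h
  obtain ⟨e, rfl⟩ := exists_arc_of_assoc_adj_inl hy
  obtain ⟨e', rfl⟩ := exists_arc_of_assoc_adj_inl hz
  exact not_assoc_adj_arc_arc e e' hyz

theorem not_inTriangle_arc (e : G.Arc) : ¬ InTriangle G.Assoc (Sum.inr (Sum.inl e)) := by
  intro h
  obtain ⟨y, z, hy, hz, hyz⟩ := inTriangle_iff_exists_adj.mp h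
  rcases eq_inl_or_eq_kappa_of_assoc_adj_arc hy with ⟨v, rfl⟩ | rfl <;>
    rcases eq_inl_or_eq_kappa_of_assoc_adj_arc hz with ⟨w, rfl⟩ | rfl
  · exact not_assoc_adj_inl_inl v w hyz
  · exact not_assoc_adj_inl_kappa v _ _ hyz
  · exact not_assoc_adj_inl_kappa w _ _ hyz.symm
  · exact hyz.ne rfl

variable (G) in
def kappaClique (i : Fin k) : Finset G.AssocNode :=
  Finset.univ.map ⟨fun j => Sum.inr (Sum.inr ⟨i, j⟩),
    Sum.inr_injective.comp (Sum.inr_injective.comp sigma_mk_injective)⟩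

theorem mem_kappaClique (i : Fin k) (j : Fin ((i : ℕ) + 3)) :
    (Sum.inr (Sum.inr ⟨i, j⟩) : G.AssocNode) ∈ G.kappaClique i :=
  Finset.mem_map_of_mem _ (Finset.mem_univ j)

theorem kappaClique_isNClique (i : Fin k) :
    G.Assoc.IsNClique ((i : ℕ) + 3) (G.kappaClique i) := by
  refine ⟨?_, by simp [kappaClique]⟩
  intro a ha b hb hab
  obtain ⟨ja, -, rfl⟩ := Finset.mem_map.mp ha
  obtain ⟨jb, -, rfl⟩ := Finset.mem_map.mp hb
  exact assoc_adj_kappa_kappa_iff.mpr ⟨rfl, fun h => hab (by simpa using h)⟩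

theorem inTriangle_kappa (i : Fin k) (j : Fin ((i : ℕ) + 3)) :
    InTriangle G.Assoc (Sum.inr (Sum.inr ⟨i, j⟩)) :=
  (kappaClique_isNClique i).isClique.inTriangle
    (by rw [(kappaClique_isNClique i).card_eq]; omega) (mem_kappaClique i j)

theorem exists_kappa_of_inTriangle {x : G.AssocNode} (hx : InTriangle G.Assoc x) :
    ∃ i j, x = Sum.inr (Sum.inr ⟨i, j⟩) := by
  rcases x with v | e | ⟨i, j⟩
  · exact absurd hx (not_inTriangle_inl v)
  · exact absurd hx (not_inTriangle_arc e)
  · exact ⟨i, j, rfl⟩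

theorem card_le_of_kappa_mem_isClique {s : Finset G.AssocNode}
    (hs : G.Assoc.IsClique (s : Set G.AssocNode)) {i : Fin k} {j : Fin ((i : ℕ) + 3)}
    (hx : Sum.inr (Sum.inr ⟨i, j⟩) ∈ s) : s.card ≤ (i : ℕ) + 3 := by
  by_cases hcard : s.card ≤ 2
  · omega
  have hsub : s ⊆ G.kappaClique i := by
    intro y hy
    by_cases hyx : y = Sum.inr (Sum.inr ⟨i, j⟩)
    · exact hyx ▸ mem_kappaClique i j
    obtain ⟨i', j', rfl⟩ := exists_kappa_of_inTriangle (hs.inTriangle (by omega) hy)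
    obtain rfl := (assoc_adj_kappa_kappa_iff.mp (hs hy hx hyx)).1
    exact mem_kappaClique i' j'
  calc s.card ≤ (G.kappaClique i).card := Finset.card_le_card hsub
    _ = (i : ℕ) + 3 := (kappaClique_isNClique i).card_eq

theorem exists_kappa_eq_iff_max_clique_card (x : G.AssocNode) (i : Fin k) :
    (∃ j : Fin ((i : ℕ) + 3), x = Sum.inr (Sum.inr ⟨i, j⟩)) ↔
      ((∃ s : Finset G.AssocNode, G.Assoc.IsNClique ((i : ℕ) + 3) s ∧ x ∈ s) ∧
        ∀ s : Finset G.AssocNode,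
          G.Assoc.IsClique (s : Set G.AssocNode) → x ∈ s → s.card ≤ (i : ℕ) + 3) := by
  constructor
  · rintro ⟨j, rfl⟩
    exact ⟨⟨_, kappaClique_isNClique i, mem_kappaClique i j⟩,
      fun s hs hx => card_le_of_kappa_mem_isClique hs hx⟩
  · rintro ⟨⟨s, hs, hx⟩, hmax⟩
    obtain ⟨i', j', rfl⟩ :=
      exists_kappa_of_inTriangle (hs.isClique.inTriangle (by rw [hs.card_eq]; omega) hx)
    have hle : (i : ℕ) + 3 ≤ i' + 3 := hs.card_eq ▸ card_le_of_kappa_mem_isClique hs.isClique hx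
    have hge : (i' : ℕ) + 3 ≤ i + 3 := (kappaClique_isNClique i').card_eq ▸
      hmax _ (kappaClique_isNClique i').isClique (mem_kappaClique i' j')
    obtain rfl : i = i' := Fin.ext (by omega)
    exact ⟨j', rfl⟩

end EdgeColouredGraph

open EdgeColouredGraph

/-- Characterisation of the three kinds of nodes of the
associated simple graph `Ḡ` of an edge-coloured graph `G` with colours
`c_1, …, c_k` (the colour `c_{i+1}` has index `i : Fin k`, and its clique has
`(i+1)+2 = i+3` nodes):
(1) `x` is a clique node `κ_{i,j}` iff the largest clique of `Ḡ` containing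
`x` has exactly `i+3` nodes;
(2) `x = ē` for an arc `e` of `G` iff `x` lies in no triangle of `Ḡ` but some
neighbour of `x` lies in a triangle;
(3) `x = v̄` for a node `v` of `G` iff `x` lies in no triangle of `Ḡ` and no
neighbour of `x` lies in a triangle. -/
theorem assoc_node_characterisation {k : ℕ} (G : EdgeColouredGraph k)
    (x : G.AssocNode) :
    (∀ i : Fin k,
      (∃ j : Fin ((i : ℕ) + 3), x = Sum.inr (Sum.inr ⟨i, j⟩)) ↔
        ((∃ s : Finset G.AssocNode, G.Assoc.IsNClique ((i : ℕ) + 3) s ∧ x ∈ s) ∧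
          ∀ s : Finset G.AssocNode,
            G.Assoc.IsClique (s : Set G.AssocNode) → x ∈ s → s.card ≤ (i : ℕ) + 3)) ∧
    ((∃ e : G.Arc, x = Sum.inr (Sum.inl e)) ↔
      (¬ InTriangle G.Assoc x ∧ ∃ y, G.Assoc.Adj x y ∧ InTriangle G.Assoc y)) ∧
    ((∃ v : G.V, x = Sum.inl v) ↔
      (¬ InTriangle G.Assoc x ∧ ∀ y, G.Assoc.Adj x y → ¬ InTriangle G.Assoc y)) := by
  refine ⟨exists_kappa_eq_iff_max_clique_card x, ⟨?_, ?_⟩, ⟨?_, ?_⟩⟩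
  · rintro ⟨e, rfl⟩
    exact ⟨not_inTriangle_arc e, _, assoc_adj_arc_kappa e, inTriangle_kappa _ 0⟩
  · rintro ⟨hx, y, hxy, hy⟩
    rcases x with v | e | ⟨i, j⟩
    · obtain ⟨e, rfl⟩ := exists_arc_of_assoc_adj_inl hxy
      exact absurd hy (not_inTriangle_arc e)
    · exact ⟨e, rfl⟩
    · exact absurd (inTriangle_kappa i j) hx
  · rintro ⟨v, rfl⟩
    refine ⟨not_inTriangle_inl v, fun y hy => ?_⟩
    obtain ⟨e, rfl⟩ := exists_arc_of_assoc_adj_inl hy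
    exact not_inTriangle_arc e
  · rintro ⟨hx, hnbr⟩
    rcases x with v | e | ⟨i, j⟩
    · exact ⟨v, rfl⟩
    · exact absurd (inTriangle_kappa _ 0) (hnbr _ (assoc_adj_arc_kappa e))
    · exact absurd (inTriangle_kappa i j) hx
end

section
/- Let T be a d-dimensional triangulation and let (T′, {B_τ}) be a tree decomposition of the dual graph D(T). Then for every face f of T (of any dimension 0 ≤ i ≤ d), the set of tree nodes τ of T′ such that B_τ contains at least one simplex having f as a face induces a connected subtree of T′. -/
/-- A `d`-dimensional triangulation: `n` abstract `d`-simplices (with vertices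
labelled `0, …, d`), some or all of whose facets are affinely identified in
pairs.  The facet `(s, a)` of the simplex `s` is the one opposite vertex `a`;
a gluing of facet `(s, a)` to facet `(q.1, q.2)` is recorded by a permutation
`σ` of the vertex labels with `σ a = q.2`, whose restriction away from `a`
describes the chosen bijection of the vertex sets of the two facets. -/
structure Triangulation (d : ℕ) where
  n : ℕ
  glue : Fin n × Fin (d + 1) → Option ((Fin n × Fin (d + 1)) × Equiv.Perm (Fin (d + 1)))
  glue_ne : ∀ {p q σ}, glue p = some (q, σ) → q ≠ p
  glue_symm : ∀ {p q σ}, glue p = some (q, σ) → glue q = some (p, σ⁻¹)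
  glue_vertex : ∀ {p q σ}, glue p = some (q, σ) → σ p.2 = q.2

namespace Triangulation

variable {d : ℕ}

/-- An ordered appearance of an `i`-face inside a simplex: a simplex together
with the injection sending the vertex labels `0, …, i` of the face to vertex
labels of the simplex. -/
def App (T : Triangulation d) (i : ℕ) : Type :=
  Fin T.n × (Fin (i + 1) ↪ Fin (d + 1))

/-- Two ordered appearances of `i`-faces are directly identified when a facet
gluing carries one to the other. -/
def appStep (T : Triangulation d) (i : ℕ) : T.App i → T.App i → Prop := fun x y =>
  ∃ (a : Fin (d + 1)) (q : Fin T.n × Fin (d + 1)) (σ : Equiv.Perm (Fin (d + 1))),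
    T.glue (x.1, a) = some (q, σ) ∧ (∀ j, x.2 j ≠ a) ∧
    y.1 = q.1 ∧ y.2 = x.2.trans σ.toEmbedding

/-- Ordered `i`-faces of the triangulation: equivalence classes of ordered
appearances under the identifications induced by the facet gluings. -/
def OFace (T : Triangulation d) (i : ℕ) : Type := Quot (T.appStep i)

/-- Reordering the vertex labels of an ordered face by a permutation. -/
def reorder (T : Triangulation d) (i : ℕ) : T.OFace i → T.OFace i → Prop := fun f g =>
  ∃ (x : T.App i) (ρ : Equiv.Perm (Fin (i + 1))),
    f = Quot.mk _ x ∧ g = Quot.mk _ (x.1, ρ.toEmbedding.trans x.2)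

/-- The `i`-faces of the triangulation: ordered `i`-faces up to reordering of
their vertex labels.  (For `i = d` these are just the simplices.) -/
def Face (T : Triangulation d) (i : ℕ) : Type := Quot (T.reorder i)

/-- The unordered face underlying an ordered face. -/
def toFace (T : Triangulation d) {i : ℕ} (f : T.OFace i) : T.Face i :=
  Quot.mk _ f

/-- A labelling of the triangulation: an arbitrary choice, for every `i`-face,
of a labelling of its vertices by `0, …, i`, i.e. of a compatible ordered
face. -/
structure Labelling (T : Triangulation d) where
  lab : ∀ i : ℕ, T.Face i → T.OFace i
  lab_spec : ∀ (i : ℕ) (f : T.Face i), T.toFace (lab i f) = f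

/-- The face `f` appears as a subface of the simplex `s`. -/
def FaceIn (T : Triangulation d) {i : ℕ} (f : T.Face i) (s : Fin T.n) : Prop :=
  ∃ φ : Fin (i + 1) ↪ Fin (d + 1), T.toFace (Quot.mk (T.appStep i) (s, φ)) = f

/-- The subface relation `f ≤_{π_0…π_i} g` between an `i`-face `f` and an
`(i+1)`-face `g` of the triangulation, relative to the labelling `L`:
vertex `j` of `f` corresponds to vertex `π j` of `g`. -/
def SubRel (T : Triangulation d) (L : T.Labelling) {i : ℕ}
    (π : Fin (i + 1) ↪ Fin (i + 2)) (f : T.Face i) (g : T.Face (i + 1)) : Prop :=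
  ∃ (s : Fin T.n) (ψ : Fin (i + 2) ↪ Fin (d + 1)),
    L.lab (i + 1) g = Quot.mk (T.appStep (i + 1)) (s, ψ) ∧
    L.lab i f = Quot.mk (T.appStep i) (s, π.trans ψ)

/-- The subface relation `f ≤_{π_0…π_i} s` between an `i`-face `f` and a
`d`-face (simplex) `s`, where `π_0, …, π_i` are vertex labels of the simplex
itself. -/
def SubSimpRel (T : Triangulation d) (L : T.Labelling) {i : ℕ}
    (π : Fin (i + 1) ↪ Fin (d + 1)) (f : T.Face i) (s : T.Face d) : Prop :=
  ∃ sx : Fin T.n,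
    (∃ ψ : Fin (d + 1) ↪ Fin (d + 1), L.lab d s = Quot.mk (T.appStep d) (sx, ψ)) ∧
    L.lab i f = Quot.mk (T.appStep i) (sx, π)

/-- Adjacency in the dual graph `D(T)`: some facet of `s` is glued to some
facet of `s'` (this includes loops, when `s = s'`). -/
def dualAdj (T : Triangulation d) (s s' : Fin T.n) : Prop :=
  ∃ (a b : Fin (d + 1)) (σ : Equiv.Perm (Fin (d + 1))),
    T.glue (s, a) = some ((s', b), σ)

/-- The degree of a node of the dual graph `D(T)`: the number of glued facets
of the simplex `s`, so that a loop contributes two to the degree. -/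
def dualDegree (T : Triangulation d) (s : Fin T.n) : ℕ :=
  (Finset.univ.filter fun a : Fin (d + 1) => (T.glue (s, a)).isSome).card

/-- Nodes of the coloured Hasse diagram `H(T)`: all faces of all dimensions,
together with the extra node `∅`. -/
def HNode (T : Triangulation d) : Type := (Σ i : ℕ, T.Face i) ⊕ Unit

/-- Colours of the coloured Hasse diagram: the empty colour `−` together
with, for each level `i = 0, …, d−1`, all ordered sequences `π_0…π_i` of
distinct integers from `{0, …, i+1}`. -/
def HColour (d : ℕ) : Type :=
  Option (Σ i : Fin d, Fin ((i : ℕ) + 1) ↪ Fin ((i : ℕ) + 2))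

/-- The (oriented) arc relation of the coloured Hasse diagram `H(T)`: an arc
of colour `π_0…π_i` from an `i`-face `f` to an `(i+1)`-face `g` whenever
`f ≤_{π_0…π_i} g`, and an arc of the empty colour from each vertex (0-face)
to `∅`. -/
def hArcRel (T : Triangulation d) (L : T.Labelling) :
    HColour d → T.HNode → T.HNode → Prop
  | none, x, y => ∃ v : T.Face 0, x = Sum.inl ⟨0, v⟩ ∧ y = Sum.inr ()
  | some ⟨i, π⟩, x, y => ∃ (f : T.Face i) (g : T.Face ((i : ℕ) + 1)),
      T.SubRel L π f g ∧ x = Sum.inl ⟨(i : ℕ), f⟩ ∧ y = Sum.inl ⟨(i : ℕ) + 1, g⟩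

/-- The arcs of the coloured Hasse diagram `H(T)`: a colour together with an
unordered pair of endpoints in the arc relation. -/
def HasseArc (T : Triangulation d) (L : T.Labelling) : Type :=
  {a : HColour d × Sym2 T.HNode // ∃ x y : T.HNode, a.2 = s(x, y) ∧ T.hArcRel L a.1 x y}

/-- The (uncoloured) adjacency relation of the coloured Hasse diagram. -/
def hasseAdj (T : Triangulation d) (L : T.Labelling) (x y : T.HNode) : Prop :=
  ∃ c : HColour d, T.hArcRel L c x y ∨ T.hArcRel L c y x

end Triangulation

/-!
The simplices containing a face `f` are connected in the dual graph through simplices that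
contain `f`: the identifications defining `f` are generated by facet gluings, each of which
joins two such simplices by a dual arc. In a tree decomposition the bags containing one simplex
form a subtree, and adjacent simplices share a bag, so following such a chain of simplices
glues their subtrees into one connected set of tree nodes.
-/

open Relation

namespace TreeDecomp

variable {V : Type} {Adj : V → V → Prop} (D : TreeDecomp Adj)

theorem reachable_of_mem_bag {S : Set D.ι} {v : V} (hS : {t | v ∈ D.bag t} ⊆ S)
    {τ τ' : D.ι} (hτ : v ∈ D.bag τ) (hτ' : v ∈ D.bag τ') :
    (D.tree.induce S).Reachable ⟨τ, hS hτ⟩ ⟨τ', hS hτ'⟩ :=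
  ((D.subtree v).preconnected ⟨τ, hτ⟩ ⟨τ', hτ'⟩).map (SimpleGraph.induceHomOfLE D.tree hS).toHom

theorem setOf_mem_bag_subset {P : V → Prop} {v : V} (hv : P v) :
    {t | v ∈ D.bag t} ⊆ {τ | ∃ v ∈ D.bag τ, P v} :=
  fun _ ht => ⟨v, ht, hv⟩

theorem reachable_of_reflTransGen {P : V → Prop} {v w : V}
    (h : ReflTransGen (fun a b => Adj a b ∧ P a ∧ P b) v w) (hv : P v) (hw : P w)
    {τ τ' : D.ι} (hτ : v ∈ D.bag τ) (hτ' : w ∈ D.bag τ') :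
    (D.tree.induce {τ | ∃ v ∈ D.bag τ, P v}).Reachable ⟨τ, ⟨v, hτ, hv⟩⟩ ⟨τ', ⟨w, hτ', hw⟩⟩ := by
  induction h generalizing τ' with
  | refl => exact D.reachable_of_mem_bag (D.setOf_mem_bag_subset hv) hτ hτ'
  | tail _ hbc ih =>
    obtain ⟨hadj, hb, -⟩ := hbc
    obtain ⟨τm, hbm, hcm⟩ := D.covers_adj _ _ hadj
    exact (ih hb hbm).trans (D.reachable_of_mem_bag (D.setOf_mem_bag_subset hw) hcm hτ')

theorem induce_connected_of_reflTransGen {P : V → Prop} (hne : ∃ v, P v)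
    (h : ∀ v w, P v → P w → ReflTransGen (fun a b => Adj a b ∧ P a ∧ P b) v w) :
    (D.tree.induce {τ | ∃ v ∈ D.bag τ, P v}).Connected := by
  obtain ⟨v, hv⟩ := hne
  obtain ⟨τ, hτ⟩ := D.covers v
  rw [SimpleGraph.connected_iff]
  refine ⟨?_, ⟨⟨τ, ⟨v, hτ, hv⟩⟩⟩⟩
  rintro ⟨τ, v, hτ, hv⟩ ⟨τ', w, hτ', hw⟩
  exact D.reachable_of_reflTransGen (h v w hv hw) hv hw hτ hτ'

end TreeDecomp

namespace Triangulation

variable {d i : ℕ} (T : Triangulation d)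

theorem dualAdj_symm {s s' : Fin T.n} (h : T.dualAdj s s') : T.dualAdj s' s := by
  obtain ⟨a, b, σ, hg⟩ := h
  exact ⟨b, a, σ⁻¹, T.glue_symm hg⟩

theorem exists_faceIn (f : T.Face i) : ∃ s, T.FaceIn f s := by
  induction f using Quot.ind with | mk g =>
  induction g using Quot.ind with | mk x =>
  exact ⟨x.1, x.2, rfl⟩

/-- Adjacency in the dual graph restricted to the star of `f`, the simplices containing `f`. -/
def starAdj (f : T.Face i) (s s' : Fin T.n) : Prop :=
  T.dualAdj s s' ∧ T.FaceIn f s ∧ T.FaceIn f s'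

theorem starAdj_symm {f : T.Face i} {s s' : Fin T.n} (h : T.starAdj f s s') :
    T.starAdj f s' s :=
  ⟨T.dualAdj_symm h.1, h.2.2, h.2.1⟩

theorem starAdj_of_appStep {x y : T.App i} (h : T.appStep i x y) :
    T.starAdj (T.toFace (Quot.mk _ x)) x.1 y.1 := by
  have hface := congrArg T.toFace (Quot.sound h)
  obtain ⟨a, q, σ, hg, -, hy, -⟩ := h
  exact ⟨⟨a, q.2, σ, by rw [hy, ← hg]⟩, ⟨x.2, rfl⟩, ⟨y.2, hface.symm⟩⟩

def starComponent (x : T.App i) : Set (Fin T.n) :=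
  {s | ReflTransGen (T.starAdj (T.toFace (Quot.mk _ x))) x.1 s}

theorem starComponent_eq_of_appStep {x y : T.App i} (h : T.appStep i x y) :
    T.starComponent x = T.starComponent y := by
  have hxy := T.starAdj_of_appStep h
  have hface : T.toFace (Quot.mk _ x) = T.toFace (Quot.mk _ y) :=
    congrArg T.toFace (Quot.sound h)
  ext s
  simp only [starComponent, Set.mem_ofPred_eq, ← hface]
  exact ⟨(ReflTransGen.single (T.starAdj_symm hxy)).trans, (ReflTransGen.single hxy).trans⟩

theorem starComponent_reorder (x : T.App i) (ρ : Equiv.Perm (Fin (i + 1))) :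
    T.starComponent x = T.starComponent (x.1, ρ.toEmbedding.trans x.2) := by
  have hface : T.toFace (Quot.mk _ x) = T.toFace (Quot.mk _ (x.1, ρ.toEmbedding.trans x.2)) :=
    Quot.sound ⟨x, ρ, rfl, rfl⟩
  simp only [starComponent, hface]

def faceStarComponent : T.Face i → Set (Fin T.n) :=
  Quot.lift (Quot.lift T.starComponent fun _ _ => T.starComponent_eq_of_appStep)
    (by rintro _ _ ⟨x, ρ, rfl, rfl⟩; exact T.starComponent_reorder x ρ)

theorem reflTransGen_starAdj_of_faceIn {f : T.Face i} {s s' : Fin T.n}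
    (hs : T.FaceIn f s) (hs' : T.FaceIn f s') : ReflTransGen (T.starAdj f) s s' := by
  obtain ⟨φ, rfl⟩ := hs
  obtain ⟨φ', hφ'⟩ := hs'
  have hcomp : T.starComponent (s', φ') = T.starComponent (s, φ) :=
    congrArg T.faceStarComponent hφ'
  have hmem : s' ∈ T.starComponent (s', φ') := ReflTransGen.refl
  rwa [hcomp] at hmem

end Triangulation

theorem bags_meeting_face_connected_general {d : ℕ} (T : Triangulation d)
    (D : TreeDecomp T.dualAdj) (i : ℕ) (f : T.Face i) :
    (D.tree.induce {τ | ∃ s ∈ D.bag τ, T.FaceIn f s}).Connected :=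
  D.induce_connected_of_reflTransGen (T.exists_faceIn f) fun _ _ =>
    T.reflTransGen_starAdj_of_faceIn

/-- Let `(T', {B_τ})` be a tree decomposition of the dual
graph `D(T)` of a `d`-dimensional triangulation `T`.  Then for every face `f`
of `T` (of any dimension `0 ≤ i ≤ d`), the set of tree nodes `τ` whose bag
contains at least one simplex having `f` as a face induces a connected
subtree of `T'`. -/
theorem bags_meeting_face_connected {d : ℕ} (T : Triangulation d)
    (D : TreeDecomp T.dualAdj) (i : ℕ) (hi : i ≤ d) (f : T.Face i) :
    (D.tree.induce {τ | ∃ s ∈ D.bag τ, T.FaceIn f s}).Connected :=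
  bags_meeting_face_connected_general T D i f
end
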